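/- Let τ ∈ ℂ with Im τ > 0, let N, n ≥ 1, let z₁,…,z_n ∈ ℂ, let A₁,…,A_n be N×N complex matrices, and let Q₁,…,Q_N ∈ ℂ. Fix k ∈ {1,…,n} and let z ∈ ℂ be such that θ₁(z−z_k|τ) ≠ 0 and θ₁(z+τ−z_k|τ) ≠ 0, and θ₁(Q_j−Q_i|τ) ≠ 0 for all i ≠ j. Define the N×N matrix L_k(z) by (L_k(z))_{ij} = −δ_{ij}(θ₁'(z−z_k|τ)/θ₁(z−z_k|τ))(A_k)_{ii} + (1−δ_{ij})·x(Q_j−Q_i, z−z_k)·(A_k)_{ij}. Then L_k(z+τ) = E⁻¹·L_k(z)·E + 2πi·diag((A_k)_{11},…,(A_k)_{NN}), where E is the diagonal matrix with E_{ii} = exp(2πi Q_i). -/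

import Mathlib

/-- The Jacobi theta function `θ₁(z|τ)` for `τ` in the upper half-plane. -/
noncomputable def theta1 (τ z : ℂ) : ℂ :=
  -Complex.I * ∑' n : ℤ, (-1 : ℂ) ^ n *
    Complex.exp ((Real.pi : ℂ) * Complex.I * τ * ((n : ℂ) + 1/2) ^ 2 +
      2 * (Real.pi : ℂ) * Complex.I * ((n : ℂ) + 1/2) * z)

open Complex in
lemma theta1_eq (τ z : ℂ) : theta1 τ z =
    -Complex.I * Complex.exp ((Real.pi : ℂ) * Complex.I * τ / 4 + (Real.pi : ℂ) * Complex.I * z) *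
      jacobiTheta₂ (z + (τ + 1) / 2) τ := by
  have h : (∑' n : ℤ, (-1 : ℂ) ^ n *
      Complex.exp ((Real.pi : ℂ) * Complex.I * τ * ((n : ℂ) + 1/2) ^ 2 +
        2 * (Real.pi : ℂ) * Complex.I * ((n : ℂ) + 1/2) * z)) =
      ∑' n : ℤ, Complex.exp ((Real.pi : ℂ) * Complex.I * τ / 4 + (Real.pi : ℂ) * Complex.I * z) *
        jacobiTheta₂_term n (z + (τ + 1) / 2) τ := by
    refine tsum_congr fun n => ?_
    rw [jacobiTheta₂_term]
    have h1 : ((-1 : ℂ)) ^ n = Complex.exp ((n : ℂ) * ((Real.pi : ℂ) * Complex.I)) := by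
      rw [Complex.exp_int_mul, Complex.exp_pi_mul_I]
    rw [h1, ← Complex.exp_add, ← Complex.exp_add]
    congr 1
    ring
  rw [theta1, h, tsum_mul_left, jacobiTheta₂]; ring
lemma theta1_shift (τ : ℂ) (w : ℂ) : theta1 τ (w + τ) =
    -Complex.exp (-((Real.pi : ℂ) * Complex.I * τ) - 2 * (Real.pi : ℂ) * Complex.I * w) *
      theta1 τ w := by
  rw [theta1_eq, theta1_eq, show w + τ + (τ + 1) / 2 = (w + (τ + 1) / 2) + τ by ring,
    jacobiTheta₂_add_left']
  have hpi : Complex.exp (-((Real.pi : ℂ) * Complex.I)) = -1 := by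
    rw [Complex.exp_neg, Complex.exp_pi_mul_I]
    norm_num
  have key : Complex.exp ((Real.pi : ℂ) * Complex.I * τ / 4 + (Real.pi : ℂ) * Complex.I * (w + τ)) *
      Complex.exp (-(Real.pi : ℂ) * Complex.I * (τ + 2 * (w + (τ + 1) / 2))) =
      -(Complex.exp (-((Real.pi : ℂ) * Complex.I * τ) - 2 * (Real.pi : ℂ) * Complex.I * w) *
        Complex.exp ((Real.pi : ℂ) * Complex.I * τ / 4 + (Real.pi : ℂ) * Complex.I * w)) := by
    rw [← Complex.exp_add, ← Complex.exp_add, show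
      (Real.pi : ℂ) * Complex.I * τ / 4 + (Real.pi : ℂ) * Complex.I * (w + τ) +
        -(Real.pi : ℂ) * Complex.I * (τ + 2 * (w + (τ + 1) / 2)) =
      -((Real.pi : ℂ) * Complex.I) + (-((Real.pi : ℂ) * Complex.I * τ) -
        2 * (Real.pi : ℂ) * Complex.I * w +
        ((Real.pi : ℂ) * Complex.I * τ / 4 + (Real.pi : ℂ) * Complex.I * w)) by ring,
      Complex.exp_add, hpi, Complex.exp_add]
    ring
  linear_combination (-Complex.I * jacobiTheta₂ (w + (τ + 1) / 2) τ) * key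
lemma theta1_diff {τ : ℂ} (hτ : 0 < τ.im) (w : ℂ) : DifferentiableAt ℂ (theta1 τ) w := by
  have : theta1 τ = fun z => -Complex.I *
      Complex.exp ((Real.pi : ℂ) * Complex.I * τ / 4 + (Real.pi : ℂ) * Complex.I * z) *
      jacobiTheta₂ (z + (τ + 1) / 2) τ := funext fun z => theta1_eq τ z
  rw [this]
  refine DifferentiableAt.mul (DifferentiableAt.const_mul ?_ _) ?_
  · exact (differentiableAt_const _ |>.add ((differentiableAt_id.const_mul _))).cexp
  · exact (differentiableAt_jacobiTheta₂_fst _ hτ).comp w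
      (differentiableAt_id.add_const _)
lemma deriv_theta1_shift {τ : ℂ} (hτ : 0 < τ.im) (w : ℂ) :
    deriv (theta1 τ) (w + τ) =
      Complex.exp (-((Real.pi : ℂ) * Complex.I * τ) - 2 * (Real.pi : ℂ) * Complex.I * w) *
        (2 * (Real.pi : ℂ) * Complex.I * theta1 τ w - deriv (theta1 τ) w) := by
  have hf : HasDerivAt (theta1 τ) (deriv (theta1 τ) w) w := (theta1_diff hτ w).hasDerivAt
  have h1 : HasDerivAt (fun s => theta1 τ (s + τ)) (deriv (theta1 τ) (w + τ) * 1) w :=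
    HasDerivAt.comp (h₂ := theta1 τ) (h := fun s => s + τ) w ((theta1_diff hτ (w + τ)).hasDerivAt) ((hasDerivAt_id w).add_const τ)
  have hg : HasDerivAt (fun s : ℂ => -((Real.pi : ℂ) * Complex.I * τ) -
      2 * (Real.pi : ℂ) * Complex.I * s) (-(2 * (Real.pi : ℂ) * Complex.I)) w := by
    simpa using ((hasDerivAt_id w).const_mul (2 * (Real.pi : ℂ) * Complex.I)).const_sub
      (-((Real.pi : ℂ) * Complex.I * τ))
  have h2 : HasDerivAt (fun s => -Complex.exp (-((Real.pi : ℂ) * Complex.I * τ) -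
      2 * (Real.pi : ℂ) * Complex.I * s) * theta1 τ s)
      (-(Complex.exp (-((Real.pi : ℂ) * Complex.I * τ) - 2 * (Real.pi : ℂ) * Complex.I * w) *
        (-(2 * (Real.pi : ℂ) * Complex.I))) * theta1 τ w +
       -Complex.exp (-((Real.pi : ℂ) * Complex.I * τ) - 2 * (Real.pi : ℂ) * Complex.I * w) *
        deriv (theta1 τ) w) w := (hg.cexp.neg).mul hf
  have heq : (fun s => theta1 τ (s + τ)) = fun s =>
      -Complex.exp (-((Real.pi : ℂ) * Complex.I * τ) - 2 * (Real.pi : ℂ) * Complex.I * s) *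
        theta1 τ s := funext fun s => theta1_shift τ s
  rw [heq] at h1
  have := h1.unique h2
  rw [mul_one] at this
  rw [this]
  ring

/-- The Lamé function `x(ξ,z) = θ₁(z-ξ|τ)·θ₁'(0|τ) / (θ₁(z|τ)·θ₁(ξ|τ))`. -/
noncomputable def lame (τ ξ z : ℂ) : ℂ :=
  theta1 τ (z - ξ) * deriv (theta1 τ) 0 / (theta1 τ z * theta1 τ ξ)

lemma lame_shift (τ : ℂ) (ξ w : ℂ) (hw : theta1 τ w ≠ 0) (hξ : theta1 τ ξ ≠ 0) :
    lame τ ξ (w + τ) = Complex.exp (2 * (Real.pi : ℂ) * Complex.I * ξ) * lame τ ξ w := by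
  rw [lame, lame, show w + τ - ξ = (w - ξ) + τ by ring, theta1_shift, theta1_shift]
  have hc : Complex.exp (-((Real.pi : ℂ) * Complex.I * τ) -
      2 * (Real.pi : ℂ) * Complex.I * (w - ξ)) =
      Complex.exp (2 * (Real.pi : ℂ) * Complex.I * ξ) *
      Complex.exp (-((Real.pi : ℂ) * Complex.I * τ) - 2 * (Real.pi : ℂ) * Complex.I * w) := by
    rw [← Complex.exp_add]
    ring_nf
  rw [hc]
  field_simp

/-- The Lax matrix `L_k(z)` generating the flow in the puncture position `z_k`. -/
noncomputable def LaxLk (τ : ℂ) {N n : ℕ} (zs : Fin n → ℂ)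
    (A : Fin n → Matrix (Fin N) (Fin N) ℂ) (Q : Fin N → ℂ) (k : Fin n) (z : ℂ) :
    Matrix (Fin N) (Fin N) ℂ :=
  Matrix.of fun i j =>
    if i = j then
      -(deriv (theta1 τ) (z - zs k) / theta1 τ (z - zs k)) * A k i i
    else
      lame τ (Q j - Q i) (z - zs k) * A k i j

/-- Twisted periodicity of the Lax matrix `L_k`:
`L_k(z+τ) = E⁻¹·L_k(z)·E + 2πi·diag((A_k)_{11},…,(A_k)_{NN})`. -/
theorem LaxLk_shift (τ : ℂ) (hτ : 0 < τ.im) (N n : ℕ) (hN : 1 ≤ N) (hn : 1 ≤ n)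
    (zs : Fin n → ℂ) (A : Fin n → Matrix (Fin N) (Fin N) ℂ)
    (Q : Fin N → ℂ) (k : Fin n) (z : ℂ)
    (h1 : theta1 τ (z - zs k) ≠ 0)
    (h2 : theta1 τ (z + τ - zs k) ≠ 0)
    (h3 : ∀ i j, i ≠ j → theta1 τ (Q j - Q i) ≠ 0) :
    LaxLk τ zs A Q k (z + τ) =
      (Matrix.diagonal fun i => Complex.exp (2 * (Real.pi : ℂ) * Complex.I * Q i))⁻¹ *
        LaxLk τ zs A Q k z *
        (Matrix.diagonal fun i => Complex.exp (2 * (Real.pi : ℂ) * Complex.I * Q i)) +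
      (2 * (Real.pi : ℂ) * Complex.I) • Matrix.diagonal (fun i => A k i i) := by
  have hE : (Matrix.diagonal fun i : Fin N =>
      Complex.exp (2 * (Real.pi : ℂ) * Complex.I * Q i))⁻¹ =
      Matrix.diagonal fun i => (Complex.exp (2 * (Real.pi : ℂ) * Complex.I * Q i))⁻¹ := by
    apply Matrix.inv_eq_left_inv
    rw [Matrix.diagonal_mul_diagonal]
    have : (fun i : Fin N => (Complex.exp (2 * (Real.pi : ℂ) * Complex.I * Q i))⁻¹ *
        Complex.exp (2 * (Real.pi : ℂ) * Complex.I * Q i)) = fun _ => 1 := by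
      funext i
      exact inv_mul_cancel₀ (Complex.exp_ne_zero _)
    rw [this, Matrix.diagonal_one]
  rw [hE]
  have hzz : z + τ - zs k = (z - zs k) + τ := by ring
  ext i j
  simp only [LaxLk, Matrix.of_apply, Matrix.add_apply, Matrix.mul_diagonal,
    Matrix.diagonal_mul, Matrix.smul_apply, Matrix.diagonal_apply, smul_eq_mul]
  by_cases hij : i = j
  · subst hij
    simp only [if_pos rfl, eq_self_iff_true, if_true]
    rw [hzz, deriv_theta1_shift hτ, theta1_shift]
    have he := Complex.exp_ne_zero (-((Real.pi : ℂ) * Complex.I * τ) -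
      2 * (Real.pi : ℂ) * Complex.I * (z - zs k))
    have he2 := Complex.exp_ne_zero (2 * (Real.pi : ℂ) * Complex.I * Q i)
    field_simp
    ring
  · simp only [if_neg hij, mul_zero, add_zero]
    rw [hzz, lame_shift τ _ _ h1 (h3 i j hij)]
    have hq : Complex.exp (2 * (Real.pi : ℂ) * Complex.I * (Q j - Q i)) =
        (Complex.exp (2 * (Real.pi : ℂ) * Complex.I * Q i))⁻¹ *
          Complex.exp (2 * (Real.pi : ℂ) * Complex.I * Q j) := by
      rw [show 2 * (Real.pi : ℂ) * Complex.I * (Q j - Q i) =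
        2 * (Real.pi : ℂ) * Complex.I * Q j - 2 * (Real.pi : ℂ) * Complex.I * Q i by ring,
        Complex.exp_sub, div_eq_inv_mul]
    rw [hq]
    ring
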